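/- arXiv:0803.1290 — 2 statements merged into one kernel-verified Lean document; each statement's English description precedes it below -/
import Mathlib

section
/- Let k₁ ≠ k₂ be two nonzero real numbers, and suppose A ∈ O^{k₁}(4,ℝ) ∩ O^{k₂}(4,ℝ), i.e. Aᵀ diag(kᵢ,1,1,1) A = diag(kᵢ,1,1,1) for i = 1,2. Then A is block diagonal of the form A = diag(ε) ⊕ Q where ε = A₀₀ ∈ {1,-1}, the off-diagonal blocks vanish (A₀ⱼ = 0 = Aⱼ₀ for j ∈ {1,2,3}), and the spatial 3×3 block Q = (Aᵢⱼ)_{i,j∈{1,2,3}} satisfies Qᵀ Q = I₃ (i.e. Q ∈ O(3)). -/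
/-!
Since `I4 k = 1 + (k - 1) E₀₀`, subtracting the two relations gives `Aᵀ E₀₀ A = E₀₀`, i.e. the
outer square of the row `A 0` is `E₀₀`, so that row is `±e₀`. Feeding this back into either
relation gives `Aᵀ A = 1`; orthogonality of `A` then forces its column `0` to be `±e₀` as well,
and the remaining `3 × 3` block is orthogonal.
-/

open Matrix

/-- `I₄^[k] = diag(k,1,1,1)`. -/
noncomputable def I4 (k : ℝ) : Matrix (Fin 4) (Fin 4) ℝ :=
  Matrix.diagonal (fun i => if i = 0 then k else 1)

section

variable {R n : Type*} [CommRing R] [Fintype n] [DecidableEq n]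

theorem transpose_mul_single_mul_apply (A : Matrix n n R) (i j l : n) :
    (Aᵀ * single i i (1 : R) * A) j l = A i j * A i l := by
  simp [mul_apply, single_apply, ite_and]

theorem row_of_transpose_mul_single_mul_eq_single {A : Matrix n n R} {i : n}
    (h : Aᵀ * single i i 1 * A = single i i 1) :
    A i i * A i i = 1 ∧ ∀ j ≠ i, A i j = 0 := by
  have hA (j l : n) : A i j * A i l = single i i (1 : R) j l := by
    rw [← transpose_mul_single_mul_apply, h]
  have hii : A i i * A i i = 1 := by simpa using hA i i
  refine ⟨hii, fun j hj => ?_⟩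
  calc A i j = A i i * (A i i * A i j) := by rw [← mul_assoc, hii, one_mul]
    _ = 0 := by simp [hA i j, hj.symm]

theorem col_eq_zero_of_transpose_mul_self_eq_one {A : Matrix n n R} {i : n}
    (hA : Aᵀ * A = 1) (hii : A i i * A i i = 1) (hrow : ∀ j ≠ i, A i j = 0) :
    ∀ j ≠ i, A j i = 0 := by
  intro j hj
  have hAAt : A * Aᵀ = 1 := mul_eq_one_comm.mp hA
  have hji : A j i * A i i = 0 := by
    have := congrFun (congrFun hAAt j) i
    rwa [mul_apply, Finset.sum_eq_single i (fun l _ hl => by simp [hrow l hl]) (by simp),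
      one_apply_ne hj] at this
  calc A j i = A j i * A i i * A i i := by rw [mul_assoc, hii, mul_one]
    _ = 0 := by rw [hji, zero_mul]

theorem transpose_mul_self_submatrix_succ_eq_one {m : ℕ}
    {A : Matrix (Fin (m + 1)) (Fin (m + 1)) R}
    (hA : Aᵀ * A = 1) (hrow : ∀ j : Fin m, A 0 j.succ = 0) :
    (A.submatrix Fin.succ Fin.succ)ᵀ * A.submatrix Fin.succ Fin.succ = 1 := by
  ext i j
  have := congrFun (congrFun hA i.succ) j.succ
  simpa [mul_apply, Fin.sum_univ_succ, hrow, one_apply] using this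

end

theorem I4_eq_one_add_smul_single (k : ℝ) : I4 k = 1 + (k - 1) • single 0 0 1 := by
  ext i j
  fin_cases i <;> fin_cases j <;> simp [I4]

theorem transpose_mul_I4_mul (A : Matrix (Fin 4) (Fin 4) ℝ) (k : ℝ) :
    Aᵀ * I4 k * A = Aᵀ * A + (k - 1) • (Aᵀ * single 0 0 1 * A) := by
  rw [I4_eq_one_add_smul_single, Matrix.mul_add, Matrix.add_mul, Matrix.mul_one,
    Matrix.mul_smul, Matrix.smul_mul]

theorem stmt6_general (k₁ k₂ : ℝ) (hne : k₁ ≠ k₂)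
    (A : Matrix (Fin 4) (Fin 4) ℝ)
    (hA₁ : Aᵀ * I4 k₁ * A = I4 k₁) (hA₂ : Aᵀ * I4 k₂ * A = I4 k₂) :
    (A 0 0 = 1 ∨ A 0 0 = -1) ∧
    (∀ j : Fin 3, A 0 j.succ = 0 ∧ A j.succ 0 = 0) ∧
    (Matrix.of fun i j : Fin 3 => A i.succ j.succ)ᵀ *
      (Matrix.of fun i j : Fin 3 => A i.succ j.succ) = 1 := by
  rw [transpose_mul_I4_mul, I4_eq_one_add_smul_single] at hA₁ hA₂
  have hE : Aᵀ * single 0 0 1 * A = single 0 0 1 := by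
    refine smul_right_injective _ (sub_ne_zero.mpr hne) ?_
    linear_combination (norm := module) hA₁ - hA₂
  have hO : Aᵀ * A = 1 := by
    linear_combination (norm := module) hA₁ - (k₁ - 1) • hE
  obtain ⟨h00, hrow⟩ := row_of_transpose_mul_single_mul_eq_single hE
  have hcol := col_eq_zero_of_transpose_mul_self_eq_one hO h00 hrow
  refine ⟨mul_self_eq_one_iff.mp h00,
    fun j => ⟨hrow _ j.succ_ne_zero, hcol _ j.succ_ne_zero⟩, ?_⟩
  exact transpose_mul_self_submatrix_succ_eq_one hO fun j => hrow _ j.succ_ne_zero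

/-- if `A` lies in `O^{k₁}(4,ℝ) ∩ O^{k₂}(4,ℝ)` for distinct nonzero
`k₁ ≠ k₂`, then `A` is block diagonal `diag(ε) ⊕ Q` with `ε = A₀₀ = ±1`,
vanishing off-diagonal blocks, and spatial block `Q ∈ O(3)`. -/
theorem stmt6 (k₁ k₂ : ℝ) (h₁ : k₁ ≠ 0) (h₂ : k₂ ≠ 0) (hne : k₁ ≠ k₂)
    (A : Matrix (Fin 4) (Fin 4) ℝ)
    (hA₁ : Aᵀ * I4 k₁ * A = I4 k₁) (hA₂ : Aᵀ * I4 k₂ * A = I4 k₂) :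
    (A 0 0 = 1 ∨ A 0 0 = -1) ∧
    (∀ j : Fin 3, A 0 j.succ = 0 ∧ A j.succ 0 = 0) ∧
    (Matrix.of fun i j : Fin 3 => A i.succ j.succ)ᵀ *
      (Matrix.of fun i j : Fin 3 => A i.succ j.succ) = 1 :=
  stmt6_general k₁ k₂ hne A hA₁ hA₂
end

section
/- Let A be a real 4×4 matrix with (det A)² = 1 satisfying Aᵀ I₄^[0] A = I₄^[0], where I₄^[0] = diag(0,1,1,1). Then: (i) Aᵢ₀ = 0 for all spatial indices i ∈ {1,2,3}; (ii) the spatial 3×3 block Q = (Aᵢⱼ)_{i,j∈{1,2,3}} satisfies Qᵀ Q = I₃; and (iii) A₀₀ ∈ {1,-1}. Conversely, every matrix of the block form A = [[ε, aₕ],[0, Q]] with ε ∈ {1,-1}, aₕ an arbitrary row 3-vector, and Q ∈ O(3), satisfies Aᵀ I₄^[0] A = I₄^[0] and (det A)² = 1. -/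
open Matrix

/-!
`Aᵀ diag(0,1,…,1) A` is the Gram matrix `BᵀB` of the spatial rows `B` of `A`. Its `(0,0)` entry is
the squared length of the spatial part of the first column of `A`, so `BᵀB = diag(0,1,…,1)` says
exactly that this part vanishes and that the spatial block `Q` of `A` is orthogonal. `A` is then
block upper triangular, so `det A = A₀₀ · det Q` with `(det Q)² = 1`, and `(det A)² = 1` becomes
`A₀₀² = 1`.
-/

namespace Matrix

variable {R : Type*}

theorem transpose_mul_diagonal_zero_one_mul [CommRing R] {n m : ℕ}
    (A : Matrix (Fin (n + 1)) (Fin m) R) :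
    Aᵀ * diagonal (fun i : Fin (n + 1) => if i = 0 then (0 : R) else 1) * A =
      (A.submatrix Fin.succ id)ᵀ * A.submatrix Fin.succ id := by
  ext i j
  rw [mul_apply, mul_apply, Fin.sum_univ_succ]
  simp [mul_diagonal]

theorem transpose_mul_self_eq_diagonal_zero_one_iff [CommRing R] [LinearOrder R]
    [IsStrictOrderedRing R] {n m : ℕ} (B : Matrix (Fin n) (Fin (m + 1)) R) :
    Bᵀ * B = diagonal (fun i : Fin (m + 1) => if i = 0 then (0 : R) else 1) ↔
      (∀ k, B k 0 = 0) ∧ (B.submatrix id Fin.succ)ᵀ * B.submatrix id Fin.succ = 1 := by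
  constructor
  · intro h
    have hcol : (fun k => B k 0) = 0 := by
      have h00 := congrFun (congrFun h 0) 0
      simp only [mul_apply, transpose_apply, diagonal_apply_eq, if_true] at h00
      exact dotProduct_self_eq_zero.mp h00
    refine ⟨congrFun hcol, ?_⟩
    ext i j
    simpa [mul_apply, diagonal_apply, one_apply] using congrFun (congrFun h i.succ) j.succ
  · rintro ⟨hcol, hQ⟩
    ext i j
    refine Fin.cases ?_ (fun i => ?_) i <;> refine Fin.cases ?_ (fun j => ?_) j
    · simp [mul_apply, hcol]
    · simp [mul_apply, hcol, diagonal_apply_ne _ (Fin.succ_ne_zero j).symm]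
    · simp [mul_apply, hcol]
    · simpa [mul_apply, diagonal_apply, one_apply] using congrFun (congrFun hQ i) j

theorem det_eq_mul_det_submatrix_succ_of_col_zero [CommRing R] {n : ℕ}
    (A : Matrix (Fin (n + 1)) (Fin (n + 1)) R) (h : ∀ i : Fin n, A i.succ 0 = 0) :
    A.det = A 0 0 * (A.submatrix Fin.succ Fin.succ).det := by
  simp [det_succ_column_zero A, Fin.sum_univ_succ, h]

theorem det_sq_eq_one_of_transpose_mul_self_eq_one [CommRing R] {n : Type*} [Fintype n]
    [DecidableEq n] {Q : Matrix n n R} (hQ : Qᵀ * Q = 1) : Q.det ^ 2 = 1 := by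
  simpa [sq] using congrArg det hQ

theorem det_sq_eq_sq_of_col_zero_of_orthogonal [CommRing R] {n : ℕ}
    (A : Matrix (Fin (n + 1)) (Fin (n + 1)) R) (hcol : ∀ i : Fin n, A i.succ 0 = 0)
    (hQ : (A.submatrix Fin.succ Fin.succ)ᵀ * A.submatrix Fin.succ Fin.succ = 1) :
    A.det ^ 2 = A 0 0 ^ 2 := by
  rw [det_eq_mul_det_submatrix_succ_of_col_zero A hcol, mul_pow,
    det_sq_eq_one_of_transpose_mul_self_eq_one hQ, mul_one]

end Matrix

theorem transpose_mul_I4_zero_mul (A : Matrix (Fin 4) (Fin 4) ℝ) :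
    Aᵀ * I4 0 * A = (A.submatrix Fin.succ id)ᵀ * A.submatrix Fin.succ id :=
  transpose_mul_diagonal_zero_one_mul A

/-- characterization of the group `O^0(4,ℝ)` (`k = 0`,
anti-Leibnizian case): `A` with `det²A = 1` and `Aᵀ I₄^[0] A = I₄^[0]` has
vanishing spatial components in its first column, orthogonal spatial block, and
`A₀₀ = ±1`; conversely any matrix of the block form `[[ε, aₕ],[0, Q]]` with
`ε = ±1` and `Q ∈ O(3)` satisfies both conditions. -/
theorem stmt7 :
    (∀ A : Matrix (Fin 4) (Fin 4) ℝ, A.det ^ 2 = 1 → Aᵀ * I4 0 * A = I4 0 →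
      (∀ i : Fin 3, A i.succ 0 = 0) ∧
      (Matrix.of fun i j : Fin 3 => A i.succ j.succ)ᵀ *
        (Matrix.of fun i j : Fin 3 => A i.succ j.succ) = 1 ∧
      (A 0 0 = 1 ∨ A 0 0 = -1)) ∧
    (∀ A : Matrix (Fin 4) (Fin 4) ℝ,
      (A 0 0 = 1 ∨ A 0 0 = -1) →
      (∀ i : Fin 3, A i.succ 0 = 0) →
      (Matrix.of fun i j : Fin 3 => A i.succ j.succ)ᵀ *
        (Matrix.of fun i j : Fin 3 => A i.succ j.succ) = 1 →
      Aᵀ * I4 0 * A = I4 0 ∧ A.det ^ 2 = 1) := by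
  constructor
  · intro A hdet hA
    rw [transpose_mul_I4_zero_mul] at hA
    obtain ⟨hcol, hQ⟩ := (transpose_mul_self_eq_diagonal_zero_one_iff _).mp hA
    refine ⟨hcol, hQ, ?_⟩
    rwa [det_sq_eq_sq_of_col_zero_of_orthogonal A hcol hQ, sq_eq_one_iff] at hdet
  · intro A h00 hcol hQ
    refine ⟨?_, ?_⟩
    · rw [transpose_mul_I4_zero_mul]
      exact (transpose_mul_self_eq_diagonal_zero_one_iff _).mpr ⟨hcol, hQ⟩
    · rwa [det_sq_eq_sq_of_col_zero_of_orthogonal A hcol hQ, sq_eq_one_iff]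
end
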